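/- arXiv:1303.6772 — 6 statements merged into one kernel-verified Lean document; each statement's English description precedes it below -/
import Mathlib

section
/- Let d ≥ 3 and D ≥ 1 be integers satisfying D(d−2) > 2, and suppose that v := 2·D(d−2)/(D(d−2)−2) is an even integer with v > 2. Then the triple (d, D, v) is one of exactly five possibilities: (3,3,6), (3,4,4), (4,2,4), (5,1,6), or (6,1,4). -/
/-- Classification of just-renormalizable TGFT models: if `d ≥ 3`, `D ≥ 1`,
`D(d-2) > 2` and `v = 2·D(d-2)/(D(d-2)-2)` is an even integer with `v > 2`
(encoded by the exact-division equation `v * (D(d-2) - 2) = 2 * D(d-2)`),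
then `(d, D, v)` is one of exactly five possibilities. -/
theorem stmt0 (d D v : ℕ) (hd : 3 ≤ d) (hD : 1 ≤ D)
    (hx : 2 < D * (d - 2))
    (hv : v * (D * (d - 2) - 2) = 2 * (D * (d - 2)))
    (hveven : Even v) (hv2 : 2 < v) :
    (d, D, v) = (3, 3, 6) ∨ (d, D, v) = (3, 4, 4) ∨ (d, D, v) = (4, 2, 4) ∨
    (d, D, v) = (5, 1, 6) ∨ (d, D, v) = (6, 1, 4) := by
  obtain ⟨k, hk⟩ := hveven
  have hv4 : 4 ≤ v := by omega
  set x := D * (d - 2) with hxdef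
  have h4 : 4 * (x - 2) ≤ v * (x - 2) := Nat.mul_le_mul_right _ hv4
  have hx4 : x ≤ 4 := by omega
  have hDx : D ≤ x := Nat.le_mul_of_pos_right D (show 0 < d - 2 by omega)
  have hdx : d - 2 ≤ x := Nat.le_mul_of_pos_left (d - 2) hD
  have hD4 : D ≤ 4 := by omega
  have hd6 : d ≤ 6 := by omega
  interval_cases D <;> interval_cases d <;> simp_all <;> omega
end

section
/- Let d ≥ 3 and D ≥ 1 be integers, set x := D(d−2), and assume x > 2 and that v := 2x/(x−2) is a positive even integer; let K := v/2. Let n_2, n_4, …, n_{2K} be natural numbers, let N be an even natural number, and let ρ be an integer with ρ ≤ 0. Define L := Σ_{k=1}^{K} k·n_{2k} − N/2 (an integer), V := Σ_{k=1}^{K} n_{2k}, and ω := x + (x−2)·L − x·V + D·ρ. Then 2ω ≤ (x−2)(v − N); in particular, ω ≥ 0 implies N ≤ v. -/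
/-- Power-counting bound for just-renormalizable TGFT models: with `x = D(d-2) > 2`,
`v = 2x/(x-2)` a positive even integer, `K = v/2`, occupation numbers `n k` of the
valence-`2k` bubbles (`1 ≤ k ≤ K`), an even number `N` of external legs, and
melonic defect `ρ ≤ 0`, the degree `ω = x + (x-2)·L - x·V + D·ρ` with
`L = Σ k·n k - N/2` and `V = Σ n k` satisfies `2ω ≤ (x-2)(v-N)`; in particular
`ω ≥ 0` implies `N ≤ v`. -/
theorem stmt1 (d D : ℤ) (hd : 3 ≤ d) (hD : 1 ≤ D)
    (x : ℤ) (hx : x = D * (d - 2)) (hx2 : 2 < x)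
    (v : ℤ) (hv : v * (x - 2) = 2 * x) (hveven : Even v) (hvpos : 0 < v)
    (K : ℕ) (hK : (K : ℤ) * 2 = v)
    (n : ℕ → ℕ) (N : ℕ) (hN : Even N) (ρ : ℤ) (hρ : ρ ≤ 0)
    (L V ω : ℤ)
    (hL : L = (∑ k ∈ Finset.Icc 1 K, (k : ℤ) * (n k : ℤ)) - (N : ℤ) / 2)
    (hV : V = ∑ k ∈ Finset.Icc 1 K, (n k : ℤ))
    (hω : ω = x + (x - 2) * L - x * V + D * ρ) :
    2 * ω ≤ (x - 2) * (v - (N : ℤ)) ∧ (0 ≤ ω → (N : ℤ) ≤ v) := by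
  obtain ⟨m, hm⟩ := hN
  have hmZ : (N : ℤ) = 2 * m := by push_cast [hm]; ring
  have hdiv : (N : ℤ) / 2 = m := by rw [hmZ]; omega
  have hKx : (K : ℤ) * (x - 2) = x := by nlinarith [hv, hK]
  have hsum : (∑ k ∈ Finset.Icc 1 K, ((x - 2) * (k : ℤ) - x) * (n k : ℤ)) ≤ 0 := by
    apply Finset.sum_nonpos
    intro k hk
    have hkK : (k : ℤ) ≤ K := by
      exact_mod_cast (Finset.mem_Icc.mp hk).2
    have h1 : (x - 2) * (k : ℤ) - x ≤ 0 := by nlinarith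
    have h2 : (0 : ℤ) ≤ (n k : ℤ) := Int.natCast_nonneg _
    exact mul_nonpos_of_nonpos_of_nonneg h1 h2
  have key : (x - 2) * L - x * V
      = (∑ k ∈ Finset.Icc 1 K, ((x - 2) * (k : ℤ) - x) * (n k : ℤ)) - (x - 2) * m := by
    rw [hL, hV, hdiv, mul_sub, Finset.mul_sum, Finset.mul_sum]
    rw [sub_right_comm, ← Finset.sum_sub_distrib]
    congr 1
    apply Finset.sum_congr rfl
    intro k _
    ring
  have hDρ : D * ρ ≤ 0 := mul_nonpos_of_nonneg_of_nonpos (by linarith) hρ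
  have h1 : 2 * ω ≤ (x - 2) * (v - (N : ℤ)) := by
    rw [hmZ]
    nlinarith [hsum, key, hDρ]
  refine ⟨h1, fun hω0 => ?_⟩
  nlinarith [h1]
end

section
/- Let N be a positive even natural number, let n₂, n₄ be natural numbers, and let ρ be an integer with ρ ≤ 0. Define ω := 3 − N/2 − 2·n₂ − n₄ + 3·ρ. Then ω ≥ 0 if and only if ρ = 0 and the triple (N, n₂, n₄) is one of: (6,0,0) with ω = 0; (4,0,0) with ω = 1; (4,0,1) with ω = 0; (2,0,0) with ω = 2; (2,0,1) with ω = 1; (2,0,2) with ω = 0; (2,1,0) with ω = 0. -/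
/-- Classification of divergent cases for the `d = D = 3` SU(2) model:
for `N` a positive even natural number, `n₂, n₄ : ℕ`, `ρ ≤ 0` an integer,
and `ω = 3 - N/2 - 2n₂ - n₄ + 3ρ`, divergence `ω ≥ 0` holds exactly in the
seven listed cases, all with `ρ = 0`. -/
theorem stmt2 (N n2 n4 : ℕ) (hN : 0 < N) (hNe : Even N) (ρ : ℤ) (hρ : ρ ≤ 0)
    (ω : ℤ) (hω : ω = 3 - (N : ℤ) / 2 - 2 * (n2 : ℤ) - (n4 : ℤ) + 3 * ρ) :
    0 ≤ ω ↔ (ρ = 0 ∧ (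
      ((N, n2, n4) = (6, 0, 0) ∧ ω = 0) ∨
      ((N, n2, n4) = (4, 0, 0) ∧ ω = 1) ∨
      ((N, n2, n4) = (4, 0, 1) ∧ ω = 0) ∨
      ((N, n2, n4) = (2, 0, 0) ∧ ω = 2) ∨
      ((N, n2, n4) = (2, 0, 1) ∧ ω = 1) ∨
      ((N, n2, n4) = (2, 0, 2) ∧ ω = 0) ∨
      ((N, n2, n4) = (2, 1, 0) ∧ ω = 0))) := by
  obtain ⟨k, hk⟩ := hNe
  subst hk
  simp only [Prod.mk.injEq]
  omega
end

section
/- For every real α > 0 and every ψ ∈ (0, π): K_α(ψ) = 2√π · e^{α/4} · (ψ / sin ψ) · α^{−3/2} · e^{−ψ²/α} · F_α(ψ). -/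
open Real

/-- The SU(2) heat kernel at time `α`, as a function of the class angle `ψ`:
`K_α(ψ) = Σ_{m≥1} m · e^{-α(m²-1)/4} · sin(mψ)/sin(ψ)`. -/
noncomputable def Kheat (α ψ : ℝ) : ℝ :=
  ∑' m : ℕ, ((m : ℝ) + 1) * Real.exp (-α * (((m : ℝ) + 1) ^ 2 - 1) / 4) *
    Real.sin (((m : ℝ) + 1) * ψ) / Real.sin ψ

/-- The correction factor appearing in the Poisson-resummed form of the SU(2) heat
kernel: `F_α(ψ) = 1 + Σ_{n≥1} e^{-4π²n²/α} (2 cosh(4πnψ/α) - (4πn/ψ) sinh(4πnψ/α))`. -/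
noncomputable def Fcorr (α ψ : ℝ) : ℝ :=
  1 + ∑' n : ℕ, Real.exp (-4 * π ^ 2 * ((n : ℝ) + 1) ^ 2 / α) *
    (2 * Real.cosh (4 * π * ((n : ℝ) + 1) * ψ / α) -
      (4 * π * ((n : ℝ) + 1) / ψ) * Real.sinh (4 * π * ((n : ℝ) + 1) * ψ / α))

/-!
Up to the factor `e^{α/4} / sin ψ`, the series `K_α(ψ)` is the odd theta series
`Σ_{n≥1} n e^{-π t n²} sin(2π n x) = -θ'(x, i t) / (4π)` at `x = ψ / 2π`, `t = α / 4π`, where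
`θ'` is the `z`-derivative of Jacobi's theta function `θ(z, τ) = Σ_{n∈ℤ} exp(2πinz + πin²τ)`.
The Jacobi imaginary transformation `τ ↦ -1/τ` expresses `θ'(x, i t)` through `θ` and `θ'` at the
imaginary point `(i x / t, i / t)`, where pairing the terms `±n` turns both series into real
series of `cosh` and `sinh` terms with weights `e^{-π n² / t} = e^{-4π² n² / α}`; together they
form `F_α(ψ)`, and the Gaussian prefactor `t^{-3/2} e^{-π x² / t}` becomes `α^{-3/2} e^{-ψ²/α}`.
-/

lemma HasSum.nat_add_one_add_neg {G : Type*} [AddCommGroup G] [TopologicalSpace G]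
    [IsTopologicalAddGroup G] {f : ℤ → G} {a : G} (hf : HasSum f a) :
    HasSum (fun n : ℕ => f (n + 1) + f (-(n + 1))) (a - f 0) := by
  have h := hf.nat_add_neg
  rw [← hasSum_nat_add_iff' 1] at h
  convert h using 1 <;> simp

lemma Complex.exists_hasSum_of_hasSum_ofReal {ι : Type*} {f : ι → ℝ} {w : ℂ}
    (h : HasSum (fun n => (f n : ℂ)) w) : ∃ a : ℝ, HasSum f a ∧ w = a :=
  ⟨w.re, Complex.hasSum_re h, h.unique (Complex.hasSum_ofReal.mpr (Complex.hasSum_re h))⟩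

lemma Real.rpow_neg_three_div_two {t : ℝ} (ht : 0 < t) : t ^ (-(3 : ℝ) / 2) = (t * √t)⁻¹ := by
  rw [neg_div, Real.rpow_neg ht.le, show (3 : ℝ) / 2 = 1 + 1 / 2 by norm_num,
    Real.rpow_add ht, Real.rpow_one, ← Real.sqrt_eq_rpow]

section

open Complex (I)

lemma jacobiTheta₂_term_ofReal_mul_I (n : ℤ) (x t : ℝ) :
    jacobiTheta₂_term n x (t * I) = rexp (-π * t * n ^ 2) * Complex.exp (2 * π * n * x * I) := by
  rw [jacobiTheta₂_term, Complex.ofReal_exp, ← Complex.exp_add]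
  push_cast
  ring_nf
  simp only [Complex.I_sq]
  ring_nf

lemma jacobiTheta₂_term_ofReal_mul_I_ofReal_mul_I (n : ℤ) (y t : ℝ) :
    jacobiTheta₂_term n (y * I) (t * I) = rexp (-π * t * n ^ 2 - 2 * π * n * y) := by
  rw [jacobiTheta₂_term, Complex.ofReal_exp]
  push_cast
  ring_nf
  simp only [Complex.I_sq]
  ring_nf

lemma hasSum_jacobiTheta₂'_ofReal_mul_I (x : ℝ) {t : ℝ} (ht : 0 < t) :
    HasSum (fun n : ℕ => ((-4 * π * (n + 1) * rexp (-π * t * (n + 1) ^ 2) *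
      sin (2 * π * (n + 1) * x) : ℝ) : ℂ)) (jacobiTheta₂' x (t * I)) := by
  have h := (hasSum_jacobiTheta₂'_term (x : ℂ) (τ := t * I) (by simpa using ht)).nat_add_one_add_neg
  rw [jacobiTheta₂'_term, Int.cast_zero, mul_zero, zero_mul, sub_zero] at h
  refine h.congr_fun fun n => ?_
  simp only [jacobiTheta₂'_term, jacobiTheta₂_term_ofReal_mul_I]
  push_cast
  rw [Complex.sin]
  ring_nf

lemma hasSum_jacobiTheta₂_ofReal_mul_I_ofReal_mul_I (y : ℝ) {t : ℝ} (ht : 0 < t) :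
    HasSum (fun n : ℕ => ((rexp (-π * t * (n + 1) ^ 2) * (2 * cosh (2 * π * (n + 1) * y)) : ℝ) : ℂ))
      (jacobiTheta₂ (y * I) (t * I) - 1) := by
  have h := (hasSum_jacobiTheta₂_term (y * I : ℂ) (τ := t * I)
    (by simpa using ht)).nat_add_one_add_neg
  rw [jacobiTheta₂_term_ofReal_mul_I_ofReal_mul_I] at h
  refine (by simpa using h : HasSum _ _).congr_fun fun n => ?_
  simp only [jacobiTheta₂_term_ofReal_mul_I_ofReal_mul_I, ← Complex.ofReal_add, Complex.ofReal_inj]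
  rw [cosh_eq, mul_div_cancel₀ _ two_ne_zero, mul_add, ← Real.exp_add, ← Real.exp_add]
  push_cast
  ring_nf

lemma hasSum_jacobiTheta₂'_ofReal_mul_I_ofReal_mul_I (y : ℝ) {t : ℝ} (ht : 0 < t) :
    HasSum (fun n : ℕ => ((4 * π * (n + 1) * rexp (-π * t * (n + 1) ^ 2) *
      sinh (2 * π * (n + 1) * y) : ℝ) : ℂ)) (I * jacobiTheta₂' (y * I) (t * I)) := by
  have h := (hasSum_jacobiTheta₂'_term (y * I : ℂ) (τ := t * I)
    (by simpa using ht)).nat_add_one_add_neg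
  rw [jacobiTheta₂'_term, Int.cast_zero, mul_zero, zero_mul, sub_zero] at h
  refine (h.mul_left I).congr_fun fun n => ?_
  simp only [jacobiTheta₂'_term, jacobiTheta₂_term_ofReal_mul_I_ofReal_mul_I]
  have hsinh : ∀ k : ℝ, 4 * π * k * rexp (-π * t * k ^ 2) * sinh (2 * π * k * y) =
      2 * π * k * (rexp (-π * t * k ^ 2 + 2 * π * k * y) -
        rexp (-π * t * k ^ 2 - 2 * π * k * y)) := by
    intro k
    rw [sinh_eq, Real.exp_add, Real.exp_sub, Real.exp_neg]
    ring
  rw [hsinh]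
  push_cast
  ring_nf
  simp only [Complex.I_sq]
  ring_nf

lemma jacobiTheta₂'_ofReal_mul_I_functional_equation (x : ℝ) {t : ℝ} (ht : 0 < t) :
    jacobiTheta₂' x (t * I) = ((t ^ (-(3 : ℝ) / 2) * rexp (-π * x ^ 2 / t) : ℝ) : ℂ) *
      (I * jacobiTheta₂' ((x / t : ℝ) * I) ((t⁻¹ : ℝ) * I) -
        2 * π * x * jacobiTheta₂ ((x / t : ℝ) * I) ((t⁻¹ : ℝ) * I)) := by
  have ht' : (t : ℂ) ≠ 0 := by exact_mod_cast ht.ne'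
  have hz : (x : ℂ) / (t * I) = -((x / t : ℝ) * I) := by
    push_cast
    field_simp
    rw [Complex.I_sq]
    ring
  have hτ : -1 / ((t : ℂ) * I) = (t⁻¹ : ℝ) * I := by
    push_cast
    field_simp
    rw [Complex.I_sq]
  have hsqrt : (-I * (t * I)) ^ (1 / 2 : ℂ) = (√t : ℝ) := by
    rw [show -I * (t * I) = ((t : ℝ) : ℂ) by
      linear_combination (-(t : ℂ)) * Complex.I_mul_I,
      Real.sqrt_eq_rpow, Complex.ofReal_cpow ht.le]
    norm_num
  have hexp : Complex.exp (-π * I * x ^ 2 / (t * I)) = rexp (-π * x ^ 2 / t) := by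
    rw [Complex.ofReal_exp]
    congr 1
    push_cast
    field_simp
  rw [jacobiTheta₂'_functional_equation, hz, hτ, jacobiTheta₂'_neg_left, jacobiTheta₂_neg_left,
    hsqrt, hexp, Real.rpow_neg_three_div_two ht]
  have hs : ((√t : ℝ) : ℂ) ≠ 0 := by exact_mod_cast (Real.sqrt_pos.2 ht).ne'
  push_cast
  field_simp
  ring_nf
  simp only [Complex.I_sq]
  ring

theorem tsum_mul_exp_mul_sin_eq_poisson (x : ℝ) {t : ℝ} (ht : 0 < t) :
    ∑' n : ℕ, ((n : ℝ) + 1) * rexp (-π * t * ((n : ℝ) + 1) ^ 2) * sin (2 * π * ((n : ℝ) + 1) * x) =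
      x / 2 * t ^ (-(3 : ℝ) / 2) * rexp (-π * x ^ 2 / t) *
        (1 + ∑' n : ℕ, rexp (-π * t⁻¹ * ((n : ℝ) + 1) ^ 2) *
          (2 * cosh (2 * π * ((n : ℝ) + 1) * (x / t)) -
            2 * ((n : ℝ) + 1) / x * sinh (2 * π * ((n : ℝ) + 1) * (x / t)))) := by
  -- `2 * (n + 1) / x` is a junk value at `x = 0`, where both sides vanish.
  rcases eq_or_ne x 0 with rfl | hx
  · simp
  obtain ⟨A, hA, hθ'⟩ := Complex.exists_hasSum_of_hasSum_ofReal
    (hasSum_jacobiTheta₂'_ofReal_mul_I x ht)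
  obtain ⟨C, hC, hθ⟩ := Complex.exists_hasSum_of_hasSum_ofReal
    (hasSum_jacobiTheta₂_ofReal_mul_I_ofReal_mul_I (x / t) (inv_pos.2 ht))
  obtain ⟨S, hS, hIθ'⟩ := Complex.exists_hasSum_of_hasSum_ofReal
    (hasSum_jacobiTheta₂'_ofReal_mul_I_ofReal_mul_I (x / t) (inv_pos.2 ht))
  have hfe := jacobiTheta₂'_ofReal_mul_I_functional_equation x ht
  rw [hθ', sub_eq_iff_eq_add.mp hθ, hIθ'] at hfe
  have hA_eq : A = t ^ (-(3 : ℝ) / 2) * rexp (-π * x ^ 2 / t) * (S - 2 * π * x * (C + 1)) := by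
    exact_mod_cast hfe
  have hL := (hA.mul_left (-(4 * π)⁻¹)).congr_fun fun n : ℕ => show
    ((n : ℝ) + 1) * rexp (-π * t * ((n : ℝ) + 1) ^ 2) * sin (2 * π * ((n : ℝ) + 1) * x) = _ by
      field_simp
  have hF := (hC.sub (hS.mul_left (2 * π * x)⁻¹)).congr_fun fun n : ℕ => show
    rexp (-π * t⁻¹ * ((n : ℝ) + 1) ^ 2) * (2 * cosh (2 * π * ((n : ℝ) + 1) * (x / t)) -
      2 * ((n : ℝ) + 1) / x * sinh (2 * π * ((n : ℝ) + 1) * (x / t))) = _ by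
      field_simp
      ring
  rw [hL.tsum_eq, hF.tsum_eq, hA_eq]
  field_simp
  ring

end

lemma Kheat_eq_mul_tsum (α ψ : ℝ) :
    Kheat α ψ = rexp (α / 4) / sin ψ * ∑' n : ℕ, ((n : ℝ) + 1) *
      rexp (-π * (α / (4 * π)) * ((n : ℝ) + 1) ^ 2) *
        sin (2 * π * ((n : ℝ) + 1) * (ψ / (2 * π))) := by
  rw [Kheat, ← tsum_mul_left]
  congr 1 with n
  rw [show -α * (((n : ℝ) + 1) ^ 2 - 1) / 4 = α / 4 + -π * (α / (4 * π)) * ((n : ℝ) + 1) ^ 2 by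
    field_simp; ring, Real.exp_add]
  field_simp

lemma Fcorr_eq (α ψ : ℝ) :
    Fcorr α ψ = 1 + ∑' n : ℕ, rexp (-π * (α / (4 * π))⁻¹ * ((n : ℝ) + 1) ^ 2) *
      (2 * cosh (2 * π * ((n : ℝ) + 1) * (ψ / (2 * π) / (α / (4 * π)))) -
        2 * ((n : ℝ) + 1) / (ψ / (2 * π)) *
          sinh (2 * π * ((n : ℝ) + 1) * (ψ / (2 * π) / (α / (4 * π))))) := by
  have hψ : ψ / (2 * π) / (α / (4 * π)) = 2 * ψ / α := by field_simp; ring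
  rw [Fcorr, hψ]
  congr 2 with n
  rw [div_div_eq_mul_div]
  congr 2
  · field_simp
  · ring_nf
  · ring_nf

theorem stmt4_general (α ψ : ℝ) (hα : 0 < α) :
    Kheat α ψ = 2 * Real.sqrt π * Real.exp (α / 4) * (ψ / Real.sin ψ) *
      α ^ (-(3 : ℝ) / 2) * Real.exp (-ψ ^ 2 / α) * Fcorr α ψ := by
  have hpow : (α / (4 * π)) ^ (-(3 : ℝ) / 2) = 8 * π * √π * α ^ (-(3 : ℝ) / 2) := by
    have h4π : √(4 * π) = 2 * √π := by
      rw [Real.sqrt_mul' _ pi_pos.le, show (4 : ℝ) = 2 ^ 2 by norm_num, Real.sqrt_sq two_pos.le]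
    rw [Real.div_rpow hα.le (by positivity),
      Real.rpow_neg_three_div_two (t := 4 * π) (by positivity), h4π]
    field_simp
    ring
  have hexp : -π * (ψ / (2 * π)) ^ 2 / (α / (4 * π)) = -ψ ^ 2 / α := by
    field_simp
    ring
  rw [Kheat_eq_mul_tsum, Fcorr_eq, tsum_mul_exp_mul_sin_eq_poisson _ (by positivity), hpow, hexp]
  field_simp
  ring

/-- Poisson-resummed representation of the SU(2) heat kernel: for `α > 0` and
`ψ ∈ (0, π)`, `K_α(ψ) = 2√π · e^{α/4} · (ψ/sin ψ) · α^{-3/2} · e^{-ψ²/α} · F_α(ψ)`. -/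
theorem stmt4 (α ψ : ℝ) (hα : 0 < α) (hψ : ψ ∈ Set.Ioo 0 π) :
    Kheat α ψ = 2 * Real.sqrt π * Real.exp (α / 4) * (ψ / Real.sin ψ) *
      α ^ (-(3 : ℝ) / 2) * Real.exp (-ψ ^ 2 / α) * Fcorr α ψ :=
  stmt4_general α ψ hα
end

section
/- For every ε ∈ (0, 1/4) there exists a constant C > 0 such that for all α ∈ (0, 1] and all ψ ∈ [0, 3π/4]: Σ_{n=1}^∞ e^{−4(1−ε)π²n²/α} · cosh(4πnψ/α) ≤ C·√α. -/
/-!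
For `n ≥ 1` the Gaussian factor beats the hyperbolic cosine linearly in `n`:
`-4(1-ε)π²n² + 4πnψ ≤ -(4(1-ε)π² - 4πψ) n ≤ -(1-4ε)π² n`, since `4πψ ≤ 3π²`.
So the series is dominated by the geometric series of ratio `r = e^{-(1-4ε)π²/α}`,
whose sum `r / (1 - r)` is `O(α)` because `e^{-x} ≤ 1/x`; and `α ≤ √α` on `(0, 1]`.
-/

open Real

lemma Real.cosh_le_exp_abs (x : ℝ) : cosh x ≤ exp |x| := by
  have hpos := exp_le_exp.2 (le_abs_self x)
  have hneg := exp_le_exp.2 (neg_le_abs x)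
  rw [cosh_eq]
  linarith

lemma Real.exp_neg_le_inv {x : ℝ} (hx : 0 < x) : exp (-x) ≤ x⁻¹ := by
  rw [exp_neg]
  exact inv_anti₀ hx ((le_add_of_nonneg_right zero_le_one).trans (add_one_le_exp x))

lemma exp_neg_mul_sq_mul_cosh_le {a b m t : ℝ} (ha : 0 ≤ a) (hb : 0 ≤ b) (hm : 1 ≤ m)
    (ht : 0 ≤ t) : exp (-a * m ^ 2 * t) * cosh (b * m * t) ≤ exp (-(a - b) * m * t) := by
  have hbmt : 0 ≤ b * m * t := by positivity
  have hquad : 0 ≤ a * t * (m * (m - 1)) := by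
    have := mul_nonneg (by linarith : 0 ≤ m) (sub_nonneg.2 hm)
    positivity
  calc exp (-a * m ^ 2 * t) * cosh (b * m * t)
      ≤ exp (-a * m ^ 2 * t) * exp (b * m * t) := by
        gcongr
        simpa [abs_of_nonneg hbmt] using cosh_le_exp_abs (b * m * t)
    _ = exp (-a * m ^ 2 * t + b * m * t) := (exp_add _ _).symm
    _ ≤ exp (-(a - b) * m * t) := exp_le_exp.2 (by nlinarith)

lemma exp_neg_sq_div_mul_cosh_le {ε α ψ m : ℝ} (hε : ε < 1 / 4) (hα : 0 < α) (hψ0 : 0 ≤ ψ)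
    (hψ : ψ ≤ 3 * π / 4) (hm : 1 ≤ m) :
    exp (-4 * (1 - ε) * π ^ 2 * m ^ 2 / α) * cosh (4 * π * m * ψ / α) ≤
      exp (-((1 - 4 * ε) * π ^ 2 / α) * m) := by
  have hb : 4 * π * ψ ≤ 4 * (1 - ε) * π ^ 2 - (1 - 4 * ε) * π ^ 2 := by nlinarith [pi_pos]
  calc _ = exp (-(4 * (1 - ε) * π ^ 2) * m ^ 2 * α⁻¹) * cosh (4 * π * ψ * m * α⁻¹) := by
        ring_nf
    _ ≤ exp (-(4 * (1 - ε) * π ^ 2 - 4 * π * ψ) * m * α⁻¹) :=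
        exp_neg_mul_sq_mul_cosh_le (by nlinarith [pi_pos]) (by positivity) hm (by positivity)
    _ ≤ exp (-((1 - 4 * ε) * π ^ 2 / α) * m) := by
        rw [div_eq_mul_inv, neg_mul, neg_mul, neg_mul, mul_right_comm]
        gcongr
        linarith

lemma hasSum_exp_neg_mul_succ {c : ℝ} (hc : 0 < c) :
    HasSum (fun n : ℕ ↦ exp (-c * (n + 1))) (exp (-c) / (1 - exp (-c))) := by
  have hr : exp (-c) < 1 := exp_lt_one_iff.2 (by linarith)
  have hterm : (fun n : ℕ ↦ exp (-c * (n + 1))) = fun n ↦ exp (-c) * exp (-c) ^ n := by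
    ext n
    rw [← exp_nat_mul, ← exp_add]
    ring_nf
  rw [hterm, div_eq_mul_inv]
  exact (hasSum_geometric_of_lt_one (exp_pos (-c)).le hr).mul_left (exp (-c))

lemma exp_neg_div_div_one_sub_le {δ α : ℝ} (hδ : 0 < δ) (hα : 0 < α) (hα1 : α ≤ 1) :
    exp (-(δ / α)) / (1 - exp (-(δ / α))) ≤ α / (δ * (1 - exp (-δ))) := by
  have hδα : δ ≤ δ / α := le_div_self hδ.le hα hα1
  have hgap : 0 < 1 - exp (-δ) := sub_pos.2 (exp_lt_one_iff.2 (by linarith))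
  rw [div_mul_eq_div_div]
  gcongr
  calc exp (-(δ / α)) ≤ (δ / α)⁻¹ := exp_neg_le_inv (div_pos hδ hα)
    _ = α / δ := inv_div δ α

/-- Uniform bound on the theta-like tail series: for every `ε ∈ (0, 1/4)` there is
`C > 0` such that for all `α ∈ (0,1]` and `ψ ∈ [0, 3π/4]`,
`Σ_{n≥1} e^{-4(1-ε)π²n²/α} cosh(4πnψ/α) ≤ C√α`. -/
theorem stmt9 (ε : ℝ) (hε : ε ∈ Set.Ioo (0 : ℝ) (1 / 4)) :
    ∃ C > (0 : ℝ), ∀ α ∈ Set.Ioc (0 : ℝ) 1, ∀ ψ ∈ Set.Icc (0 : ℝ) (3 * π / 4),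
      ∑' n : ℕ, Real.exp (-4 * (1 - ε) * π ^ 2 * ((n : ℝ) + 1) ^ 2 / α) *
          Real.cosh (4 * π * ((n : ℝ) + 1) * ψ / α) ≤
        C * Real.sqrt α := by
  obtain ⟨-, hε⟩ := hε
  set δ := (1 - 4 * ε) * π ^ 2
  have hδ : 0 < δ := mul_pos (by linarith) (by positivity)
  have hgap : 0 < 1 - exp (-δ) := sub_pos.2 (exp_lt_one_iff.2 (by linarith))
  refine ⟨(δ * (1 - exp (-δ)))⁻¹, by positivity, ?_⟩
  rintro α ⟨hα, hα1⟩ ψ ⟨hψ0, hψ⟩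
  have hgeom := hasSum_exp_neg_mul_succ (div_pos hδ hα)
  have hterm (n : ℕ) := exp_neg_sq_div_mul_cosh_le hε hα hψ0 hψ
    (le_add_of_nonneg_left (n.cast_nonneg : (0 : ℝ) ≤ n))
  have hsum := hgeom.summable.of_nonneg_of_le (fun n ↦ by positivity) hterm
  calc _ ≤ exp (-(δ / α)) / (1 - exp (-(δ / α))) :=
        (hsum.tsum_le_tsum hterm hgeom.summable).trans_eq hgeom.tsum_eq
    _ ≤ α / (δ * (1 - exp (-δ))) := exp_neg_div_div_one_sub_le hδ hα hα1
    _ ≤ (δ * (1 - exp (-δ)))⁻¹ * √α := by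
        rw [div_eq_inv_mul]
        gcongr
        exact le_sqrt_self_iff.2 hα1
end

section
/- For every a ∈ (0, π): lim_{α → 0⁺} sup_{ψ ∈ (0, a]} | (α^{3/2} · e^{ψ²/α} · sin(ψ) / (2√π · ψ)) · K_α(ψ) − 1 | = 0. In other words, K_α(ψ) ∼ (e^{−ψ²/α}/α^{3/2}) · 2√π · ψ/sin(ψ) as α → 0, uniformly on class angles bounded away from π. -/
open Real

/-!
Poisson summation, in the form of the functional equation of Mathlib's odd Hurwitz kernel, turns
the character expansion into the method-of-images sum over the geodesics of class angle `ψ`: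
`K_α(ψ) = e^{α/4} 2√π / (α^{3/2} sin ψ) · ∑_{n ∈ ℤ} (ψ + 2πn) e^{-(ψ + 2πn)²/α}`.
After normalisation the term `n = 0` is exactly `1`. The terms `n = ±k` are taken in pairs:
their sum is `e^{-4π²k²/α} (2 cosh u - (4πk/ψ) sinh u)` with `u = 4πkψ/α`, and `sinh u ≤ u e^u`
absorbs the factor `1/ψ`. What remains is `O(k² e^{-4πk(πk - a)/α}/α)` uniformly in `ψ ∈ (0, a]`,
which is summable in `k` and tends to `0` with `α` since `a < π`.
-/

open Filter Topology HurwitzZeta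

theorem Kheat_eq_sinKernel {α : ℝ} (hα : 0 < α) (ψ : ℝ) :
    Kheat α ψ = exp (α / 4) / (2 * sin ψ) * sinKernel (ψ / (2 * π)) (α / (4 * π)) := by
  have hsum := (hasSum_nat_add_iff' 1).2 (hasSum_nat_sinKernel (ψ / (2 * π))
    (by positivity : 0 < α / (4 * π)))
  simp only [Finset.range_one, Finset.sum_singleton, Nat.cast_zero, mul_zero, zero_mul,
    sub_zero, Nat.cast_add, Nat.cast_one] at hsum
  rw [Kheat, ← (hsum.mul_left (exp (α / 4) / (2 * sin ψ))).tsum_eq]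
  refine tsum_congr fun m ↦ ?_
  have hangle : 2 * π * (ψ / (2 * π)) * ((m : ℝ) + 1) = ((m : ℝ) + 1) * ψ := by
    field_simp
  have hexp : -α * (((m : ℝ) + 1) ^ 2 - 1) / 4 =
      α / 4 + -π * ((m : ℝ) + 1) ^ 2 * (α / (4 * π)) := by
    field_simp; ring
  rw [hangle, hexp, exp_add]
  ring

theorem sinKernel_eq_rpow_mul_oddKernel (b : ℝ) {x : ℝ} (hx : 0 < x) :
    sinKernel b (1 / x) = x ^ ((3 : ℝ) / 2) * oddKernel b x := by
  rw [oddKernel_functional_equation, ← mul_assoc, mul_one_div_cancel (by positivity), one_mul]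

noncomputable def heatRatio (α ψ : ℝ) : ℝ :=
  α ^ ((3 : ℝ) / 2) * exp (ψ ^ 2 / α) * sin ψ / (2 * sqrt π * ψ) * Kheat α ψ

/-- `e^{ψ²/α} (ψ + 2πt) e^{-(ψ + 2πt)²/α} / ψ`: the image at `ψ + 2πt`, relative to the image
at `ψ`. -/
noncomputable def imageTerm (α ψ t : ℝ) : ℝ :=
  (1 + 2 * π * t / ψ) * exp (-(4 * π * t * (π * t + ψ)) / α)

theorem heatRatio_eq_oddKernel {α ψ : ℝ} (hα : 0 < α) (hs : sin ψ ≠ 0) :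
    heatRatio α ψ =
      exp (α / 4) * (2 * π * exp (ψ ^ 2 / α) / ψ * oddKernel (ψ / (2 * π)) (4 * π / α)) := by
  have hψ : ψ ≠ 0 := by rintro rfl; simp at hs
  have hpow : α ^ ((3 : ℝ) / 2) * (4 * π / α) ^ ((3 : ℝ) / 2) = 8 * π * sqrt π := by
    rw [← mul_rpow hα.le (by positivity), mul_div_cancel₀ _ hα.ne',
      show (3 : ℝ) / 2 = 1 + 1 / 2 by norm_num, rpow_add (by positivity), rpow_one,
      ← sqrt_eq_rpow, sqrt_mul' _ pi_pos.le, show (4 : ℝ) = 2 ^ 2 by norm_num,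
      sqrt_sq zero_le_two]
    ring
  rw [heatRatio, Kheat_eq_sinKernel hα, show α / (4 * π) = 1 / (4 * π / α) by field_simp,
    sinKernel_eq_rpow_mul_oddKernel _ (by positivity)]
  field_simp
  rw [hpow]
  ring

theorem hasSum_imageTerm {α ψ : ℝ} (hα : 0 < α) (hψ : ψ ≠ 0) :
    HasSum (fun n : ℤ ↦ imageTerm α ψ n)
      (2 * π * exp (ψ ^ 2 / α) / ψ * oddKernel (ψ / (2 * π)) (4 * π / α)) := by
  refine ((hasSum_int_oddKernel (ψ / (2 * π)) (by positivity : 0 < 4 * π / α)).mul_left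
    (2 * π * exp (ψ ^ 2 / α) / ψ)).congr_fun fun n ↦ ?_
  have hexp : -(4 * π * n * (π * n + ψ)) / α =
      ψ ^ 2 / α + -π * (n + ψ / (2 * π)) ^ 2 * (4 * π / α) := by
    field_simp; ring
  rw [imageTerm, hexp, exp_add]
  field_simp
  ring

theorem hasSum_imageTerm_add_neg {α ψ : ℝ} (hα : 0 < α) (hs : sin ψ ≠ 0) :
    HasSum (fun k : ℕ ↦ imageTerm α ψ (k + 1) + imageTerm α ψ (-(k + 1)))
      (exp (-(α / 4)) * heatRatio α ψ - 1) := by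
  have hψ : ψ ≠ 0 := by rintro rfl; simp at hs
  have hsum := (hasSum_nat_add_iff' 1).2 (hasSum_imageTerm hα hψ).nat_add_neg
  have hzero : imageTerm α ψ 0 = 1 := by simp [imageTerm]
  simp only [Finset.range_one, Finset.sum_singleton, Nat.cast_zero, Int.cast_zero, neg_zero,
    hzero] at hsum
  rw [heatRatio_eq_oddKernel hα hs, ← mul_assoc, ← exp_add, neg_add_cancel, exp_zero, one_mul,
    show ∀ S : ℝ, S - 1 = S + 1 - (1 + 1) by intro S; ring]
  refine hsum.congr_fun fun k ↦ ?_
  push_cast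
  rfl

theorem exp_sub_exp_neg_le (u : ℝ) : exp u - exp (-u) ≤ 2 * u * exp u := by
  have h : 1 - 2 * u ≤ exp (-(2 * u)) := by linarith [add_one_le_exp (-(2 * u))]
  calc exp u - exp (-u) = exp u * (1 - exp (-(2 * u))) := by
        rw [mul_sub, ← exp_add]; ring_nf
    _ ≤ exp u * (2 * u) := by gcongr; linarith
    _ = 2 * u * exp u := by ring

theorem abs_imageTerm_add_neg_le {α ψ K : ℝ} (hα : 0 < α) (hψ : 0 < ψ) (hK : 0 ≤ K) :
    |imageTerm α ψ K + imageTerm α ψ (-K)| ≤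
      2 * (1 + 8 * π ^ 2 * K ^ 2 / α) * exp (-(4 * π * K * (π * K - ψ)) / α) := by
  set u := 4 * π * K * ψ / α with hu
  set E := exp (-(4 * π ^ 2 * K ^ 2) / α)
  have hu0 : 0 ≤ u := by positivity
  have hpos : exp (-(4 * π * K * (π * K + ψ)) / α) = E * exp (-u) := by
    rw [← exp_add]; congr 1; ring
  have hneg : exp (-(4 * π * -K * (π * -K + ψ)) / α) = E * exp u := by
    rw [← exp_add]; congr 1; ring
  have hpair : imageTerm α ψ K + imageTerm α ψ (-K) =
      E * ((exp u + exp (-u)) - 2 * π * K / ψ * (exp u - exp (-u))) := by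
    rw [imageTerm, imageTerm, hpos, hneg]
    ring
  have hsinh := exp_sub_exp_neg_le u
  have hmono : exp (-u) ≤ exp u := exp_le_exp.2 (by linarith)
  calc |imageTerm α ψ K + imageTerm α ψ (-K)|
      ≤ E * ((exp u + exp (-u)) + 2 * π * K / ψ * (exp u - exp (-u))) := by
        rw [hpair, abs_mul, abs_of_pos (exp_pos _)]
        have : 0 ≤ 2 * π * K / ψ * (exp u - exp (-u)) :=
          mul_nonneg (by positivity) (by linarith)
        gcongr
        exact abs_le.2 ⟨by linarith [exp_pos u, exp_pos (-u)], by linarith⟩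
    _ ≤ E * (2 * exp u + 2 * π * K / ψ * (2 * u * exp u)) := by gcongr; linarith
    _ = 2 * (1 + 8 * π ^ 2 * K ^ 2 / α) * (E * exp u) := by
        rw [hu]; field_simp; ring
    _ = 2 * (1 + 8 * π ^ 2 * K ^ 2 / α) * exp (-(4 * π * K * (π * K - ψ)) / α) := by
        rw [← exp_add]; congr 2; ring

theorem abs_imageTerm_succ_add_neg_le {a α ψ : ℝ} (haπ : a ≤ π) (hα : 0 < α) (hα1 : α ≤ 1)
    (hψ : 0 < ψ) (hψa : ψ ≤ a) (k : ℕ) :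
    |imageTerm α ψ (k + 1) + imageTerm α ψ (-(k + 1))| ≤
      (2 + 16 * π ^ 2) * (((k : ℝ) + 1) ^ 2 * exp (-(4 * π * (π - a) * k))) *
        (exp (-(4 * π * (π - a)) / α) / α) := by
  set c := 4 * π * (π - a) with hc
  set K : ℝ := k + 1
  have hk : (0 : ℝ) ≤ k := k.cast_nonneg
  have hc0 : 0 ≤ c := mul_nonneg (by positivity) (sub_nonneg.2 haπ)
  have hcoef : 2 * (1 + 8 * π ^ 2 * K ^ 2 / α) ≤ (2 + 16 * π ^ 2) * K ^ 2 / α := by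
    rw [← sub_nonneg]
    have : (2 + 16 * π ^ 2) * K ^ 2 / α - 2 * (1 + 8 * π ^ 2 * K ^ 2 / α) =
        2 * (K ^ 2 - α) / α := by field_simp; ring
    rw [this]
    have : α ≤ K ^ 2 := by nlinarith
    positivity
  have hexp : exp (-(4 * π * K * (π * K - ψ)) / α) ≤ exp (-c / α) * exp (-(c * k)) := by
    rw [← exp_add, exp_le_exp, div_add' _ _ _ hα.ne', div_le_div_iff_of_pos_right hα]
    have h1 : 0 ≤ 4 * π * K * (π * k + (a - ψ)) := by
      have := pi_pos; have : 0 ≤ a - ψ := by linarith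
      positivity
    have h2 : 0 ≤ c * k * (1 - α) := mul_nonneg (mul_nonneg hc0 hk) (by linarith)
    have h3 : 4 * π * K * (π * K - ψ) = c * K + 4 * π * K * (π * k + (a - ψ)) := by
      rw [hc]; ring
    nlinarith
  calc |imageTerm α ψ K + imageTerm α ψ (-K)|
      ≤ 2 * (1 + 8 * π ^ 2 * K ^ 2 / α) * exp (-(4 * π * K * (π * K - ψ)) / α) :=
        abs_imageTerm_add_neg_le hα hψ (by positivity)
    _ ≤ (2 + 16 * π ^ 2) * K ^ 2 / α * (exp (-c / α) * exp (-(c * k))) := by gcongr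
    _ = (2 + 16 * π ^ 2) * (K ^ 2 * exp (-(c * k))) * (exp (-c / α) / α) := by ring

theorem summable_sq_succ_mul_exp_neg {c : ℝ} (hc : 0 < c) :
    Summable fun k : ℕ ↦ ((k : ℝ) + 1) ^ 2 * exp (-(c * k)) := by
  refine (((summable_nat_add_iff 1).2 (Real.summable_pow_mul_exp_neg_nat_mul 2 hc)).mul_left
    (exp c)).congr fun k ↦ ?_
  rw [mul_left_comm, ← exp_add]
  push_cast
  ring_nf

theorem abs_heatRatio_sub_one_le {a α ψ : ℝ} (haπ : a < π) (hα : 0 < α) (hα1 : α ≤ 1)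
    (hψ : 0 < ψ) (hψa : ψ ≤ a) :
    |heatRatio α ψ - 1| ≤ (exp (α / 4) - 1) + exp (α / 4) * ((2 + 16 * π ^ 2) *
      (∑' k : ℕ, ((k : ℝ) + 1) ^ 2 * exp (-(4 * π * (π - a) * k))) *
        (exp (-(4 * π * (π - a)) / α) / α)) := by
  have hs : sin ψ ≠ 0 := (sin_pos_of_pos_of_lt_pi hψ (by linarith)).ne'
  have hc : 0 < 4 * π * (π - a) := mul_pos (by positivity) (sub_pos.2 haπ)
  have hpairs := hasSum_imageTerm_add_neg hα hs
  have hratio : heatRatio α ψ - 1 = (exp (α / 4) - 1) + exp (α / 4) *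
      ∑' k : ℕ, (imageTerm α ψ (k + 1) + imageTerm α ψ (-(k + 1))) := by
    rw [hpairs.tsum_eq, mul_sub, ← mul_assoc, ← exp_add, add_neg_cancel, exp_zero, one_mul]
    ring
  have htail := tsum_of_norm_bounded
    (((summable_sq_succ_mul_exp_neg hc).hasSum.mul_left (2 + 16 * π ^ 2)).mul_right
      (exp (-(4 * π * (π - a)) / α) / α))
    fun k ↦ (norm_eq_abs _).trans_le (abs_imageTerm_succ_add_neg_le haπ.le hα hα1 hψ hψa k)
  rw [hratio]
  refine (abs_add_le _ _).trans ?_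
  rw [abs_of_nonneg (by linarith [one_le_exp (by positivity : 0 ≤ α / 4)]), abs_mul,
    abs_of_pos (exp_pos _)]
  gcongr
  exact htail

theorem tendsto_exp_neg_div_div_nhdsGT_zero {c : ℝ} (hc : 0 < c) :
    Tendsto (fun α : ℝ ↦ exp (-c / α) / α) (𝓝[>] 0) (𝓝 0) := by
  have h := ((tendsto_pow_mul_exp_neg_atTop_nhds_zero 1).comp
    (tendsto_inv_nhdsGT_zero.const_mul_atTop hc)).const_mul c⁻¹
  rw [mul_zero] at h
  refine h.congr fun α ↦ ?_
  simp only [Function.comp_apply, pow_one]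
  field_simp

/-- Uniform small-time asymptotics of the SU(2) heat kernel away from the antipode:
for every `a ∈ (0, π)`,
`sup_{ψ ∈ (0,a]} |(α^{3/2} e^{ψ²/α} sin ψ / (2√π ψ)) K_α(ψ) - 1| → 0` as `α → 0⁺`,
i.e. `K_α(ψ) ∼ (e^{-ψ²/α}/α^{3/2}) · 2√π · ψ/sin ψ` uniformly on `(0, a]`. -/
theorem stmt15 (a : ℝ) (ha : a ∈ Set.Ioo (0 : ℝ) π) :
    Filter.Tendsto
      (fun α : ℝ => ⨆ ψ : Set.Ioc (0 : ℝ) a,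
        |α ^ ((3 : ℝ) / 2) * Real.exp ((ψ : ℝ) ^ 2 / α) * Real.sin (ψ : ℝ) /
            (2 * Real.sqrt π * (ψ : ℝ)) * Kheat α (ψ : ℝ) - 1|)
      (nhdsWithin 0 (Set.Ioi 0)) (nhds 0) := by
  have hc : 0 < 4 * π * (π - a) := mul_pos (by positivity) (sub_pos.2 ha.2)
  have hexp : Tendsto (fun α : ℝ ↦ exp (α / 4)) (𝓝[>] 0) (𝓝 1) := by
    simpa using ((by fun_prop : Continuous fun α : ℝ ↦ exp (α / 4)).tendsto 0).mono_left
      nhdsWithin_le_nhds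
  have hbound := (hexp.sub_const 1).add
    (hexp.mul ((tendsto_exp_neg_div_div_nhdsGT_zero hc).const_mul ((2 + 16 * π ^ 2) *
      ∑' k : ℕ, ((k : ℝ) + 1) ^ 2 * exp (-(4 * π * (π - a) * k)))))
  rw [sub_self, mul_zero, mul_zero, add_zero] at hbound
  have : Nonempty (Set.Ioc 0 a) := ⟨⟨a, ha.1, le_rfl⟩⟩
  refine squeeze_zero' (.of_forall fun α ↦ Real.iSup_nonneg fun ψ ↦ abs_nonneg _) ?_ hbound
  filter_upwards [Ioc_mem_nhdsGT one_pos] with α hα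
  exact ciSup_le fun ψ ↦ abs_heatRatio_sub_one_le ha.2 hα.1 hα.2 ψ.2.1 ψ.2.2
end
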